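/- Let Q̄ be a valuation measure with respect to the basket and define, for each i, the probability measure Q_i on (Ω, F(T)) by dQ_i/dQ̄ = S̄_i(T)/S̄_i(0) (note E^{Q̄}[S̄_i(T)] = S̄_i(0) > 0 since S̄ is a Q̄-martingale and A(0) = {1,…,d}). Then (Q_i)_{i=1}^d is a numéraire-consistent family of probability measures, and ∑_i S̄_i(0)·Q_i = Q̄; in particular ∑_i Q_i is equivalent to Q̄. -/

import Mathlib

open MeasureTheory Filter Set Function
open scoped ENNReal

noncomputable section

/-- The product `x * y` of two elements of `[0,∞]` is defined unless `{x, y} = {0, ∞}`. -/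
def DefinedProd (x y : ℝ≥0∞) : Prop := ¬(x = 0 ∧ y = ∞) ∧ ¬(x = ∞ ∧ y = 0)

/-- An exchange matrix: a `d × d` matrix with entries in `[0,∞]` such that `s i i = 1` and
`s i j * s j k = s i k` whenever the product is defined. -/
structure IsExchangeMatrix {d : ℕ} (s : Fin d → Fin d → ℝ≥0∞) : Prop where
  diag : ∀ i, s i i = 1
  consistent : ∀ i j k, DefinedProd (s i j) (s j k) → s i j * s j k = s i k

/-- A value vector for an exchange matrix `s`: `s i j * v j = v i` whenever defined. -/
def IsValueVector {d : ℕ} (s : Fin d → Fin d → ℝ≥0∞) (v : Fin d → ℝ≥0∞) : Prop :=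
  ∀ i j, DefinedProd (s i j) (v j) → s i j * v j = v i

open Classical in
/-- The set of active indices of an exchange matrix: those whose row sum is finite. -/
def activeFinset {d : ℕ} (s : Fin d → Fin d → ℝ≥0∞) : Finset (Fin d) :=
  Finset.univ.filter fun i => ∑ j, s i j < ∞

/-- The market model of the paper: a right-continuous filtration `F` (with `F 0` trivial) on
`[0,T]`, and a right-continuous adapted process `S` of exchange matrices with deterministic
initial value `S0` all of whose rows are finite (no currency has devalued at time `0`). -/
structure MarketModel (d : ℕ) (Ω : Type*) [mΩ : MeasurableSpace Ω] (T : ℝ) where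
  F : Filtration ℝ mΩ
  S : ℝ → Ω → Fin d → Fin d → ℝ≥0∞
  S0 : Fin d → Fin d → ℝ≥0∞
  T_pos : 0 < T
  rc_F : ∀ t ∈ Set.Ico (0 : ℝ) T, (⨅ u ∈ Set.Ioi t, F u) ≤ F t
  trivial_F0 : ∀ A : Set Ω, MeasurableSet[F 0] A → A = ∅ ∨ A = Set.univ
  adapted_S : ∀ t ∈ Set.Icc (0 : ℝ) T, ∀ i j, Measurable[F t] fun ω => S t ω i j
  rc_S : ∀ ω i j, ∀ t ∈ Set.Ico (0 : ℝ) T,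
    Tendsto (fun u => S u ω i j) (nhdsWithin t (Set.Ioi t)) (nhds (S t ω i j))
  exchange_S : ∀ t ∈ Set.Icc (0 : ℝ) T, ∀ ω, IsExchangeMatrix fun i j => S t ω i j
  init_S : ∀ ω, S 0 ω = S0
  active_S0 : ∀ i, ∑ j, S0 i j < ∞

namespace MarketModel

variable {d : ℕ} {Ω : Type*} [mΩ : MeasurableSpace Ω] {T : ℝ}

/-- Basket-quoted price of the `i`-th currency. -/
def Sbar (M : MarketModel d Ω T) (i : Fin d) (t : ℝ) (ω : Ω) : ℝ≥0∞ :=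
  (∑ j, M.S t ω i j)⁻¹

/-- The (random) set of active currencies at time `t`. -/
def active (M : MarketModel d Ω T) (t : ℝ) (ω : Ω) : Finset (Fin d) :=
  activeFinset fun i j => M.S t ω i j

/-- The payoff of a claim `C` in terms of the basket:
`C̄ = (1/|A(T)|) ∑_{j ∈ A(T)} S̄_j(T) C_j`. -/
def Cbar (M : MarketModel d Ω T) (C : Ω → Fin d → ℝ≥0∞) (ω : Ω) : ℝ≥0∞ :=
  ((M.active T ω).card : ℝ≥0∞)⁻¹ * ∑ j ∈ M.active T ω, M.Sbar j T ω * C ω j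

/-- A contingent claim: an `F(T)`-measurable value vector for `S(T)`. -/
def IsClaim (M : MarketModel d Ω T) (C : Ω → Fin d → ℝ≥0∞) : Prop :=
  (∀ i, Measurable fun ω => C ω i) ∧
  ∀ ω, IsValueVector (fun i j => M.S T ω i j) (C ω)

end MarketModel

/-- A real-valued martingale on the time interval `[0, T]`. -/
def MartingaleOn {Ω : Type*} {mΩ : MeasurableSpace Ω} (F : Filtration ℝ mΩ)
    (Q : Measure Ω) (X : ℝ → Ω → ℝ) (T : ℝ) : Prop :=
  (∀ t ∈ Set.Icc (0 : ℝ) T, StronglyMeasurable[F t] (X t) ∧ Integrable (X t) Q) ∧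
  ∀ r ∈ Set.Icc (0 : ℝ) T, ∀ t ∈ Set.Icc (0 : ℝ) T, r ≤ t → Q[X t|F r] =ᵐ[Q] X r

/-- A real-valued supermartingale on the time interval `[0, T]`. -/
def SupermartingaleOn {Ω : Type*} {mΩ : MeasurableSpace Ω} (F : Filtration ℝ mΩ)
    (Q : Measure Ω) (X : ℝ → Ω → ℝ) (T : ℝ) : Prop :=
  (∀ t ∈ Set.Icc (0 : ℝ) T, StronglyMeasurable[F t] (X t) ∧ Integrable (X t) Q) ∧
  ∀ r ∈ Set.Icc (0 : ℝ) T, ∀ t ∈ Set.Icc (0 : ℝ) T, r ≤ t → Q[X t|F r] ≤ᵐ[Q] X r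

/-- A local martingale on `[0, T]`: there is a nondecreasing sequence of stopping times
with `Q(lim_n τ_n > T) = 1` such that each stopped process is a martingale on `[0, T]`. -/
def LocalMartingaleOn {Ω : Type*} {mΩ : MeasurableSpace Ω} (F : Filtration ℝ mΩ)
    (Q : Measure Ω) (X : ℝ → Ω → ℝ) (T : ℝ) : Prop :=
  ∃ τ : ℕ → Ω → ℝ,
    (∀ n, IsStoppingTime F (fun ω => ((τ n ω : ℝ) : WithTop ℝ))) ∧
    (∀ n ω, τ n ω ≤ τ (n + 1) ω) ∧
    (∀ᵐ ω ∂Q, ∃ n, T < τ n ω) ∧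
    ∀ n, MartingaleOn F Q (fun t ω => X (min t (τ n ω)) ω) T

/-- A numéraire-consistent family of probability measures:
`E^{Q_i}[S_{i,j}(t) 1_A] = S_{i,j}(0) Q_j(A ∩ {S_{j,i}(t) > 0})`. -/
def NumeraireConsistent {d : ℕ} {Ω : Type*} [mΩ : MeasurableSpace Ω] {T : ℝ}
    (M : MarketModel d Ω T) (Q : Fin d → Measure Ω) : Prop :=
  (∀ i, IsProbabilityMeasure (Q i)) ∧
  ∀ i j : Fin d, ∀ t ∈ Set.Icc (0 : ℝ) T, ∀ A : Set Ω, MeasurableSet[M.F t] A →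
    ∫⁻ ω in A, M.S t ω i j ∂(Q i) = M.S0 i j * Q j (A ∩ {ω | 0 < M.S t ω j i})

/-- A valuation measure with respect to the basket: the basket-quoted prices form a
`Q̄`-martingale on `[0, T]`. -/
def IsValuationMeasure {d : ℕ} {Ω : Type*} [mΩ : MeasurableSpace Ω] {T : ℝ}
    (M : MarketModel d Ω T) (Qb : Measure Ω) : Prop :=
  IsProbabilityMeasure Qb ∧
  ∀ i, MartingaleOn M.F Qb (fun t ω => (M.Sbar i t ω).toReal) T

/-- The aggregation valuation formula
`E^{Q̄}[C̄ | F(r)] = ∑_{j ∈ A(r)} S̄_j(r) E^{Q_j}[C_j / |A(T)| | F(r)]`. -/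
def AggregationFormula {d : ℕ} {Ω : Type*} [mΩ : MeasurableSpace Ω] {T : ℝ}
    (M : MarketModel d Ω T) (Qb : Measure Ω) (Q : Fin d → Measure Ω)
    (C : Ω → Fin d → ℝ≥0∞) (r : ℝ) : Prop :=
  Qb[fun ω => (M.Cbar C ω).toReal|M.F r] =ᵐ[Qb] fun ω =>
    ∑ j, Set.indicator {ω' | ∑ k, M.S r ω' j k < ∞}
      (fun ω' => (M.Sbar j r ω').toReal *
        ((Q j)[fun ω'' => (C ω'' j / ((M.active T ω'').card : ℝ≥0∞)).toReal|M.F r]) ω') ω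

/-- An `[0,∞]`-valued process jumps to zero on `[0, T]`: it is zero at some time `t ∈ [0, T]`
while its left limit at `t` is strictly positive. -/
def JumpsToZeroOn (X : ℝ → ℝ≥0∞) (T : ℝ) : Prop :=
  ∃ t ∈ Set.Icc (0 : ℝ) T, X t = 0 ∧ 0 < Function.leftLim X t

/-- A `[0,∞]`-valued stopping time. -/
def IsStoppingTimeE {Ω : Type*} {mΩ : MeasurableSpace Ω} (F : Filtration ℝ mΩ)
    (τ : Ω → ℝ≥0∞) : Prop :=
  ∀ t : ℝ, 0 ≤ t → MeasurableSet[F t] {ω | τ ω ≤ ENNReal.ofReal t}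

/-- Membership in the σ-algebra `F(τ)` for a `[0,∞]`-valued stopping time `τ`. -/
def MeasurableSetAtE {Ω : Type*} {mΩ : MeasurableSpace Ω} (F : Filtration ℝ mΩ)
    (τ : Ω → ℝ≥0∞) (A : Set Ω) : Prop :=
  MeasurableSet A ∧ ∀ t : ℝ, 0 ≤ t → MeasurableSet[F t] (A ∩ {ω | τ ω ≤ ENNReal.ofReal t})

/-- A predictable time: a stopping time announced by a nondecreasing sequence of stopping
times converging to it and strictly smaller than it on its finiteness set. -/
def IsPredictableTimeE {Ω : Type*} {mΩ : MeasurableSpace Ω} (F : Filtration ℝ mΩ)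
    (σ : Ω → ℝ≥0∞) : Prop :=
  IsStoppingTimeE F σ ∧
  ∃ a : ℕ → Ω → ℝ≥0∞,
    (∀ n, IsStoppingTimeE F (a n)) ∧
    (∀ n ω, a n ω ≤ a (n + 1) ω) ∧
    (∀ ω, (⨆ n, a n ω) = σ ω) ∧
    ∀ n ω, 0 < σ ω → σ ω < ∞ → a n ω < σ ω

/-- No Obvious Devaluations: for every currency `i` and stopping time `τ`,
`P(i ∈ A(T) | F(τ)) > 0` almost surely on `{τ < ∞} ∩ {i ∈ A(τ)}`, formulated via
`F(τ)`-measurable subsets of that event. -/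
def NOD {d : ℕ} {Ω : Type*} [mΩ : MeasurableSpace Ω] {T : ℝ}
    (M : MarketModel d Ω T) (P : Measure Ω) : Prop :=
  ∀ i : Fin d, ∀ τ : Ω → ℝ≥0∞, IsStoppingTimeE M.F τ →
    ∀ A : Set Ω, MeasurableSetAtE M.F τ A →
      (∀ ω ∈ A, τ ω < ∞ ∧ ∑ j, M.S (τ ω).toReal ω i j < ∞) →
      0 < P A → 0 < P (A ∩ {ω | ∑ j, M.S T ω i j < ∞})

/-!
Under `Q̄` the basket prices `S̄ᵢ` are martingales, so the measures `S̄ᵢ(T) · Q̄` and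
`S̄ᵢ(t) · Q̄` agree on `F(t)`. Combined with the pointwise identity
`S_{i,j}(t) S̄ᵢ(t) = S̄ⱼ(t) 1_{S_{j,i}(t) > 0}` for an exchange matrix, this is numéraire
consistency. Moreover the basket prices of an exchange matrix sum to at most one, and to exactly
one when some row sum is finite; hence `∑ᵢ S̄ᵢ(T) ≤ 1` has expectation `∑ᵢ S̄ᵢ(0) = 1`, so it
equals `1` `Q̄`-a.s., which gives `∑ᵢ S̄ᵢ(T) · Q̄ = Q̄`.
-/

lemma le_sum_row {d : ℕ} (s : Fin d → Fin d → ℝ≥0∞) (a b : Fin d) : s a b ≤ ∑ k, s a k :=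
  Finset.single_le_sum (fun _ _ => zero_le) (Finset.mem_univ b)

namespace IsExchangeMatrix

variable {d : ℕ} {s : Fin d → Fin d → ℝ≥0∞}

lemma one_le_sum_row (hs : IsExchangeMatrix s) (a : Fin d) : 1 ≤ ∑ k, s a k :=
  hs.diag a ▸ le_sum_row s a a

lemma sum_row_eq_mul (hs : IsExchangeMatrix s) {a b : Fin d} (h0 : s a b ≠ 0) (h1 : s a b ≠ ∞) :
    ∑ k, s a k = s a b * ∑ k, s b k := by
  rw [Finset.mul_sum]
  exact Finset.sum_congr rfl fun k _ =>
    (hs.consistent a b k ⟨fun h => h0 h.1, fun h => h1 h.1⟩).symm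

lemma apply_symm (hs : IsExchangeMatrix s) {a b : Fin d} (h0 : s a b ≠ 0) (h1 : s a b ≠ ∞) :
    s b a = (s a b)⁻¹ := by
  refine ENNReal.eq_inv_of_mul_eq_one_left ?_
  rw [mul_comm]
  exact (hs.consistent a b a ⟨fun h => h0 h.1, fun h => h1 h.1⟩).trans (hs.diag a)

lemma apply_ne_zero (hs : IsExchangeMatrix s) {a b : Fin d} (hba : s b a ≠ ∞) : s a b ≠ 0 := by
  intro h0
  have h := hs.consistent a b a ⟨fun h => hba h.2, fun h => by simp [h0] at h⟩
  rw [h0, zero_mul, hs.diag] at h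
  exact zero_ne_one h

lemma inv_sum_row_eq (hs : IsExchangeMatrix s) {i₀ : Fin d} (hfin : ∑ k, s i₀ k ≠ ∞)
    (j : Fin d) : (∑ k, s j k)⁻¹ = s i₀ j * (∑ k, s i₀ k)⁻¹ := by
  rcases eq_or_ne (s i₀ j) 0 with h0 | h0
  · have hj : ∑ k, s j k = ∞ := by
      by_contra hj
      exact hs.apply_ne_zero (ne_top_of_le_ne_top hj (le_sum_row s j i₀)) h0
    rw [h0, zero_mul, hj, ENNReal.inv_top]
  · have h1 : s i₀ j ≠ ∞ := ne_top_of_le_ne_top hfin (le_sum_row s i₀ j)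
    have hji := hs.apply_symm h0 h1
    have hji0 : s j i₀ ≠ 0 := by rw [hji]; exact ENNReal.inv_ne_zero.2 h1
    have hji1 : s j i₀ ≠ ∞ := by rw [hji]; exact ENNReal.inv_ne_top.2 h0
    rw [hs.sum_row_eq_mul hji0 hji1, ENNReal.mul_inv (Or.inl hji0) (Or.inl hji1), hji, inv_inv]

lemma sum_inv_sum_row_eq_one (hs : IsExchangeMatrix s) {i₀ : Fin d}
    (hfin : ∑ k, s i₀ k ≠ ∞) : ∑ j, (∑ k, s j k)⁻¹ = 1 := by
  rw [Finset.sum_congr rfl fun j _ => hs.inv_sum_row_eq hfin j, ← Finset.sum_mul]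
  exact ENNReal.mul_inv_cancel (zero_lt_one.trans_le (hs.one_le_sum_row i₀)).ne' hfin

lemma sum_inv_sum_row_le_one (hs : IsExchangeMatrix s) : ∑ j, (∑ k, s j k)⁻¹ ≤ 1 := by
  by_cases h : ∃ i₀, ∑ k, s i₀ k ≠ ∞
  · obtain ⟨i₀, h⟩ := h
    exact (hs.sum_inv_sum_row_eq_one h).le
  · simp [show ∀ j, ∑ k, s j k = ∞ by simpa using h]

lemma mul_inv_sum_row (hs : IsExchangeMatrix s) (i j : Fin d) :
    s i j * (∑ k, s i k)⁻¹ = if 0 < s j i then (∑ k, s j k)⁻¹ else 0 := by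
  rcases eq_or_ne (∑ k, s i k) ∞ with hi | hi
  · rw [hi, ENNReal.inv_top, mul_zero]
    split_ifs with hji
    · rcases eq_or_ne (s j i) ∞ with hji' | hji'
      · rw [eq_top_mono (le_sum_row s j i) hji', ENNReal.inv_top]
      · rw [hs.sum_row_eq_mul hji.ne' hji', hi, ENNReal.mul_top hji.ne', ENNReal.inv_top]
    · rfl
  · have hji : 0 < s j i :=
      pos_iff_ne_zero.2 (hs.apply_ne_zero (ne_top_of_le_ne_top hi (le_sum_row s i j)))
    rw [if_pos hji, hs.inv_sum_row_eq hi j]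

end IsExchangeMatrix

section WithDensity

variable {Ω : Type*} {m m₀ : MeasurableSpace Ω} {μ : Measure Ω} {g h f : Ω → ℝ≥0∞}

lemma lintegral_mul_eq_of_forall_setLIntegral_eq (hm : m ≤ m₀) (hg : Measurable g)
    (hh : Measurable h) (hgh : ∀ s, MeasurableSet[m] s → ∫⁻ ω in s, g ω ∂μ = ∫⁻ ω in s, h ω ∂μ)
    (hf : Measurable[m] f) : ∫⁻ ω, f ω * g ω ∂μ = ∫⁻ ω, f ω * h ω ∂μ := by
  have htrim : (μ.withDensity g).trim hm = (μ.withDensity h).trim hm := by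
    refine @Measure.ext Ω m _ _ fun s hs => ?_
    rw [trim_measurableSet_eq hm hs, trim_measurableSet_eq hm hs,
      withDensity_apply _ (hm s hs), withDensity_apply _ (hm s hs), hgh s hs]
  have hf₀ : Measurable f := hf.mono hm le_rfl
  simp only [mul_comm (f _)]
  change ∫⁻ ω, (g * f) ω ∂μ = ∫⁻ ω, (h * f) ω ∂μ
  rw [← lintegral_withDensity_eq_lintegral_mul μ hg hf₀,
    ← lintegral_withDensity_eq_lintegral_mul μ hh hf₀, ← lintegral_trim hm hf, htrim,
    lintegral_trim hm hf]

lemma setLIntegral_mul_eq_of_forall_setLIntegral_eq (hm : m ≤ m₀) (hg : Measurable g)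
    (hh : Measurable h) (hgh : ∀ s, MeasurableSet[m] s → ∫⁻ ω in s, g ω ∂μ = ∫⁻ ω in s, h ω ∂μ)
    (hf : Measurable[m] f) {A : Set Ω} (hA : MeasurableSet[m] A) :
    ∫⁻ ω in A, f ω * g ω ∂μ = ∫⁻ ω in A, f ω * h ω ∂μ := by
  refine lintegral_mul_eq_of_forall_setLIntegral_eq hm hg hh (fun s hs => ?_) hf
  rw [Measure.restrict_restrict (hm s hs)]
  exact hgh _ (hs.inter hA)

end WithDensity

namespace MartingaleOn

variable {Ω : Type*} {mΩ : MeasurableSpace Ω} {F : Filtration ℝ mΩ} {Q : Measure Ω}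
  [IsFiniteMeasure Q] {T r t : ℝ} {B : Set Ω}

lemma setIntegral_eq {X : ℝ → Ω → ℝ} (hX : MartingaleOn F Q X T) (hr : r ∈ Icc 0 T)
    (ht : t ∈ Icc 0 T) (hrt : r ≤ t) (hB : MeasurableSet[F r] B) :
    ∫ ω in B, X t ω ∂Q = ∫ ω in B, X r ω ∂Q := by
  rw [← setIntegral_condExp (F.le r) (hX.1 t ht).2 hB]
  exact integral_congr_ae (ae_restrict_of_ae (hX.2 r hr t ht hrt))

lemma setLIntegral_eq {g : ℝ → Ω → ℝ≥0∞} (hX : MartingaleOn F Q (fun t ω => (g t ω).toReal) T)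
    (hg : ∀ t ∈ Icc 0 T, ∀ ω, g t ω ≠ ∞) (hr : r ∈ Icc 0 T) (ht : t ∈ Icc 0 T) (hrt : r ≤ t)
    (hB : MeasurableSet[F r] B) : ∫⁻ ω in B, g t ω ∂Q = ∫⁻ ω in B, g r ω ∂Q := by
  have hlint : ∀ u ∈ Icc 0 T, ∫⁻ ω in B, g u ω ∂Q = ENNReal.ofReal (∫ ω in B, (g u ω).toReal ∂Q) :=
    fun u hu => by
      rw [ofReal_integral_eq_lintegral_ofReal (hX.1 u hu).2.restrict
        (ae_of_all _ fun _ => ENNReal.toReal_nonneg)]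
      exact lintegral_congr fun ω => (ENNReal.ofReal_toReal (hg u hu ω)).symm
  rw [hlint t ht, hlint r hr, hX.setIntegral_eq hr ht hrt hB]

end MartingaleOn

namespace MarketModel

variable {d : ℕ} {Ω : Type*} [MeasurableSpace Ω] {T t : ℝ} (M : MarketModel d Ω T)

lemma measurable_S (ht : t ∈ Icc 0 T) (i j : Fin d) : Measurable fun ω => M.S t ω i j :=
  (M.adapted_S t ht i j).mono (M.F.le t) le_rfl

lemma adapted_Sbar (ht : t ∈ Icc 0 T) (i : Fin d) : Measurable[M.F t] (M.Sbar i t) :=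
  (Finset.measurable_sum Finset.univ fun j _ => M.adapted_S t ht i j).inv

lemma measurable_Sbar (ht : t ∈ Icc 0 T) (i : Fin d) : Measurable (M.Sbar i t) :=
  (M.adapted_Sbar ht i).mono (M.F.le t) le_rfl

lemma Sbar_ne_top (ht : t ∈ Icc 0 T) (i : Fin d) (ω : Ω) : M.Sbar i t ω ≠ ∞ :=
  ENNReal.inv_ne_top.2 (zero_lt_one.trans_le ((M.exchange_S t ht ω).one_le_sum_row i)).ne'

lemma Sbar_zero (i : Fin d) (ω : Ω) : M.Sbar i 0 ω = (∑ j, M.S0 i j)⁻¹ := by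
  rw [Sbar, M.init_S ω]

lemma isExchangeMatrix_S0 [Nonempty Ω] : IsExchangeMatrix M.S0 := by
  obtain ⟨ω⟩ := ‹Nonempty Ω›
  simpa [M.init_S ω] using M.exchange_S 0 ⟨le_rfl, M.T_pos.le⟩ ω

lemma sum_S0_ne_zero [Nonempty Ω] (i : Fin d) : ∑ j, M.S0 i j ≠ 0 :=
  (zero_lt_one.trans_le (M.isExchangeMatrix_S0.one_le_sum_row i)).ne'

lemma S_mul_Sbar (ht : t ∈ Icc 0 T) (i j : Fin d) (ω : Ω) :
    M.S t ω i j * M.Sbar i t ω = {ω | 0 < M.S t ω j i}.indicator (M.Sbar j t) ω := by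
  rw [Sbar, (M.exchange_S t ht ω).mul_inv_sum_row i j, indicator_apply]
  rfl

lemma withDensity_Sbar_div_Sbar_zero (Qb : Measure Ω) (i : Fin d) :
    (Qb.withDensity fun ω => M.Sbar i T ω / M.Sbar i 0 ω) =
      (∑ j, M.S0 i j) • Qb.withDensity (M.Sbar i T) := by
  rw [← withDensity_smul' _ _ (M.active_S0 i).ne]
  congr 1
  funext ω
  rw [M.Sbar_zero, div_eq_mul_inv, inv_inv, Pi.smul_apply, smul_eq_mul, mul_comm]

end MarketModel

namespace IsValuationMeasure

variable {d : ℕ} {Ω : Type*} [MeasurableSpace Ω] {T t : ℝ} {M : MarketModel d Ω T}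
  {Qb : Measure Ω}

lemma nonempty (hQb : IsValuationMeasure M Qb) : Nonempty Ω :=
  have := hQb.1
  nonempty_of_isProbabilityMeasure Qb

lemma setLIntegral_Sbar (hQb : IsValuationMeasure M Qb) (ht : t ∈ Icc 0 T) (i : Fin d)
    {B : Set Ω} (hB : MeasurableSet[M.F t] B) :
    ∫⁻ ω in B, M.Sbar i T ω ∂Qb = ∫⁻ ω in B, M.Sbar i t ω ∂Qb :=
  have := hQb.1
  (hQb.2 i).setLIntegral_eq (fun _ hu => M.Sbar_ne_top hu i) ht ⟨M.T_pos.le, le_rfl⟩ ht.2 hB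

lemma lintegral_Sbar (hQb : IsValuationMeasure M Qb) (i : Fin d) :
    ∫⁻ ω, M.Sbar i T ω ∂Qb = (∑ j, M.S0 i j)⁻¹ := by
  have := hQb.1
  have h := hQb.setLIntegral_Sbar ⟨le_rfl, M.T_pos.le⟩ i (@MeasurableSet.univ Ω (M.F 0))
  simp only [Measure.restrict_univ, M.Sbar_zero] at h
  simp [h]

lemma sum_Sbar_ae_eq_one (hQb : IsValuationMeasure M Qb) (hd : 0 < d) :
    (fun ω => ∑ i, M.Sbar i T ω) =ᵐ[Qb] 1 := by
  have hT : T ∈ Icc 0 T := ⟨M.T_pos.le, le_rfl⟩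
  have := hQb.1
  have hint : ∫⁻ ω, ∑ i, M.Sbar i T ω ∂Qb = 1 := by
    rw [lintegral_finsetSum _ fun i _ => M.measurable_Sbar hT i]
    simp only [hQb.lintegral_Sbar]
    have := hQb.nonempty
    exact M.isExchangeMatrix_S0.sum_inv_sum_row_eq_one (i₀ := ⟨0, hd⟩) (M.active_S0 _).ne
  refine ae_eq_of_ae_le_of_lintegral_le
    (ae_of_all _ fun ω => (M.exchange_S T hT ω).sum_inv_sum_row_le_one) (by simp [hint])
    aemeasurable_const ?_
  simp [hint]

lemma sum_withDensity_Sbar (hQb : IsValuationMeasure M Qb) (hd : 0 < d) :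
    ∑ i, Qb.withDensity (M.Sbar i T) = Qb := by
  have hT : T ∈ Icc 0 T := ⟨M.T_pos.le, le_rfl⟩
  ext s hs
  simp only [Measure.coe_finsetSum, Finset.sum_apply, withDensity_apply _ hs]
  rw [← lintegral_finsetSum _ fun i _ => M.measurable_Sbar hT i,
    lintegral_congr_ae (ae_restrict_of_ae (hQb.sum_Sbar_ae_eq_one hd))]
  simp

/-- Change of numéraire from currency `i` to currency `j` at time `t`. -/
lemma setLIntegral_S_withDensity_Sbar (hQb : IsValuationMeasure M Qb) (ht : t ∈ Icc 0 T)
    (i j : Fin d) {A : Set Ω} (hA : MeasurableSet[M.F t] A) :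
    ∫⁻ ω in A, M.S t ω i j ∂Qb.withDensity (M.Sbar i T) =
      Qb.withDensity (M.Sbar j T) (A ∩ {ω | 0 < M.S t ω j i}) := by
  have hT : T ∈ Icc 0 T := ⟨M.T_pos.le, le_rfl⟩
  have hB : MeasurableSet[M.F t] {ω | 0 < M.S t ω j i} :=
    measurableSet_lt measurable_const (M.adapted_S t ht j i)
  rw [setLIntegral_withDensity_eq_setLIntegral_mul _ (M.measurable_Sbar hT i)
      (M.measurable_S ht i j) (M.F.le t _ hA), withDensity_apply _ (M.F.le t _ (hA.inter hB)),
    hQb.setLIntegral_Sbar ht j (hA.inter hB)]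
  calc ∫⁻ ω in A, M.Sbar i T ω * M.S t ω i j ∂Qb
      = ∫⁻ ω in A, M.S t ω i j * M.Sbar i t ω ∂Qb := by
        simp only [mul_comm (M.Sbar i T _)]
        exact setLIntegral_mul_eq_of_forall_setLIntegral_eq (M.F.le t) (M.measurable_Sbar hT i)
          (M.measurable_Sbar ht i) (fun s hs => hQb.setLIntegral_Sbar ht i hs)
          (M.adapted_S t ht i j) hA
    _ = ∫⁻ ω in A ∩ {ω | 0 < M.S t ω j i}, M.Sbar j t ω ∂Qb := by
        simp only [M.S_mul_Sbar ht]
        rw [lintegral_indicator (M.F.le t _ hB), Measure.restrict_restrict (M.F.le t _ hB),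
          inter_comm]

lemma numeraireConsistent (hQb : IsValuationMeasure M Qb) :
    NumeraireConsistent M fun i => (∑ j, M.S0 i j) • Qb.withDensity (M.Sbar i T) := by
  have := hQb.nonempty
  refine ⟨fun i => ⟨?_⟩, fun i j t ht A hA => ?_⟩
  · rw [Measure.smul_apply, withDensity_apply _ MeasurableSet.univ, Measure.restrict_univ,
      hQb.lintegral_Sbar, smul_eq_mul, ENNReal.mul_inv_cancel (M.sum_S0_ne_zero i)
        (M.active_S0 i).ne]
  · have hS0 := M.isExchangeMatrix_S0
    have hij : M.S0 i j ≠ ∞ := ne_top_of_le_ne_top (M.active_S0 i).ne (le_sum_row _ i j)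
    have hji : M.S0 j i ≠ ∞ := ne_top_of_le_ne_top (M.active_S0 j).ne (le_sum_row _ j i)
    have hrow : ∑ k, M.S0 i k = M.S0 i j * ∑ k, M.S0 j k :=
      hS0.sum_row_eq_mul (hS0.apply_ne_zero hji) hij
    rw [Measure.restrict_smul, lintegral_smul_measure,
      hQb.setLIntegral_S_withDensity_Sbar ht i j hA, hrow, Measure.smul_apply, smul_eq_mul,
      smul_eq_mul, mul_assoc]

end IsValuationMeasure

/-- disaggregation densities: given a valuation measure `Q̄` with respect to
the basket, the measures `Q_i` defined by `dQ_i/dQ̄ = S̄_i(T)/S̄_i(0)` form a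
numéraire-consistent family, `∑ i, S̄_i(0) Q_i = Q̄`, and `∑ i, Q i` is equivalent to `Q̄`. -/
theorem disaggregation_densities {d : ℕ} {Ω : Type*} [MeasurableSpace Ω] {T : ℝ}
    (hd : 0 < d) (M : MarketModel d Ω T) (Qb : Measure Ω)
    (hQb : IsValuationMeasure M Qb) (Q : Fin d → Measure Ω)
    (hQdef : ∀ i, Q i = Qb.withDensity fun ω => M.Sbar i T ω / M.Sbar i 0 ω) :
    NumeraireConsistent M Q ∧
    (∑ i, ((∑ j, M.S0 i j)⁻¹ • Q i)) = Qb ∧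
    ((∑ i, Q i) ≪ Qb ∧ Qb ≪ (∑ i, Q i)) := by
  have := hQb.nonempty
  obtain rfl : Q = fun i => (∑ j, M.S0 i j) • Qb.withDensity (M.Sbar i T) :=
    funext fun i => (hQdef i).trans (M.withDensity_Sbar_div_Sbar_zero Qb i)
  have hsum : ∑ i, (∑ j, M.S0 i j)⁻¹ • (∑ j, M.S0 i j) • Qb.withDensity (M.Sbar i T) = Qb := by
    simp only [smul_smul, ENNReal.inv_mul_cancel (M.sum_S0_ne_zero _) (M.active_S0 _).ne,
      one_smul]
    exact hQb.sum_withDensity_Sbar hd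
  refine ⟨hQb.numeraireConsistent, hsum, ?_, ?_⟩
  · rw [← Measure.sum_fintype]
    exact Measure.absolutelyContinuous_sum_left fun i =>
      (withDensity_absolutelyContinuous _ _).smul_left _
  · calc Qb = _ := hsum.symm
      _ ≪ _ := by
        rw [← Measure.sum_fintype, ← Measure.sum_fintype]
        exact Measure.absolutelyContinuous_sum_left fun i =>
          Measure.absolutelyContinuous_sum_right i Measure.smul_absolutelyContinuous
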